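/- For every integer k ≥ 9, there is no balanced permutation sequence of length n = 6k + 5. -/

import Mathlib

/-!
Only the constraints of the first four days are needed. Write `a = ⌈n/2⌉`, `b = ⌈2n/3⌉`,
`c = ⌈3n/4⌉` and call a player *low* on a day if their item that day is among the best `a`.
Every player is low on the first or the second day, so `2a - n` players are low on both.
A player whose third-day item lies in `(b, c]` and who gets an item worse than `c` on one of the
first four days must get it on the fourth day, and is then low on both of the first two days.
Since each player gets an item worse than `c` on at most one of the first four days, double
counting gives `(c - b) + 4(n - c) ≤ 2a`, which fails for `n = 6k + 5` as soon as `k ≥ 9`.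
-/

/-- `BalancedSeq n σ` : the permutation sequence `σ_1, …, σ_n` (day `s : Fin n`, player `i`)
is balanced: for every player `i`, every day `t ∈ {1,…,n}` and every `j ∈ {1,…,t}`,
the `j`-th smallest of the items received in the first `t` days is at most `⌈j·n/t⌉`;
equivalently, in the first `t` days player `i` receives at least `j` items from among
items `1, …, ⌈j·n/t⌉` (item assigned on day `s` has rank `(σ s i : ℕ) + 1 ∈ {1,…,n}`). -/
def BalancedSeq (n : ℕ) (σ : Fin n → Equiv.Perm (Fin n)) : Prop :=
  ∀ i : Fin n, ∀ t ∈ Finset.Icc 1 n, ∀ j ∈ Finset.Icc 1 t,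
    j ≤ (Finset.univ.filter (fun s : Fin n => (s : ℕ) < t ∧
        (((σ s i : ℕ) + 1 : ℤ) ≤ ⌈((j * n : ℕ) : ℚ) / (t : ℚ)⌉))).card

open Finset

/-- `⌈j·n/t⌉`, computed in `ℕ`. -/
def quota (n t j : ℕ) : ℕ := (j * n + t - 1) / t

theorem lt_quota_iff {n t j v : ℕ} (ht : 0 < t) : v < quota n t j ↔ v * t < j * n := by
  rw [quota, Nat.lt_iff_add_one_le, Nat.le_div_iff_mul_le ht, add_mul]
  omega

theorem intCast_add_one_le_ceil_div_iff {m t v : ℕ} (ht : 0 < t) :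
    (v : ℤ) + 1 ≤ ⌈(m : ℚ) / t⌉ ↔ v * t < m := by
  rw [Int.add_one_le_iff, Int.lt_ceil, lt_div_iff₀ (by positivity)]
  exact_mod_cast Iff.rfl

theorem forall_of_le_card_filter {n t j : ℕ} {P : Fin n → Prop} [DecidablePred P]
    (h : j ≤ #{s : Fin n | (s : ℕ) < t ∧ P s}) {F : Finset (Fin n)}
    (hF : ∀ s ∈ F, (s : ℕ) < t ∧ ¬P s) (hFt : t ≤ j + #F) {s : Fin n} (hs : (s : ℕ) < t)
    (hsF : s ∉ F) : P s := by
  by_contra hP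
  have hsub : ({s : Fin n | (s : ℕ) < t ∧ P s} : Finset (Fin n))
      ⊆ ({s : Fin n | (s : ℕ) < t} : Finset (Fin n)) \ insert s F := by
    intro x hx
    simp only [mem_filter, mem_univ, true_and, mem_sdiff, mem_insert] at hx ⊢
    refine ⟨hx.1, ?_⟩
    rintro (rfl | hxF)
    exacts [hP hx.2, (hF x hxF).2 hx.2]
  have hins : insert s F ⊆ ({s : Fin n | (s : ℕ) < t} : Finset (Fin n)) := by
    intro x hx
    rw [mem_insert] at hx
    rcases hx with rfl | hxF
    exacts [mem_filter.2 ⟨mem_univ _, hs⟩, mem_filter.2 ⟨mem_univ _, (hF x hxF).1⟩]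
  have hcard := card_le_card hsub
  have hFcard := card_le_card hins
  rw [card_sdiff_of_subset hins, card_insert_of_notMem hsF, Fin.card_filter_val_lt] at hcard
  rw [card_insert_of_notMem hsF, Fin.card_filter_val_lt] at hFcard
  omega

theorem card_add_card_le_of_inter_subset {α : Type*} [Fintype α] [DecidableEq α]
    {s t u v : Finset α} (huv : u ∪ v = univ) (hst : s ∩ t ⊆ u ∩ v) : #s + #t ≤ #u + #v :=
  calc #s + #t = #(s ∪ t) + #(s ∩ t) := (card_union_add_card_inter s t).symm
    _ ≤ #(u ∪ v) + #(u ∩ v) := add_le_add (huv ▸ card_le_univ _) (card_le_card hst)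
    _ = #u + #v := card_union_add_card_inter u v

namespace Equiv.Perm

variable {n : ℕ} (π : Equiv.Perm (Fin n))

theorem card_filter_val_lt {q : ℕ} (hq : q ≤ n) : #{i | (π i : ℕ) < q} = q := by
  rw [card_equiv π (t := {v : Fin n | (v : ℕ) < q}) (by simp), Fin.card_filter_val_lt]
  omega

theorem card_filter_le_val {q : ℕ} (hq : q ≤ n) : #{i | q ≤ (π i : ℕ)} = n - q := by
  simp_rw [← not_lt]
  rw [filter_not, card_sdiff_of_subset (filter_subset _ _), card_univ, Fintype.card_fin,
    π.card_filter_val_lt hq]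

theorem card_filter_le_val_lt {b c : ℕ} (hbc : b ≤ c) (hc : c ≤ n) :
    #{i | b ≤ (π i : ℕ) ∧ (π i : ℕ) < c} = c - b := by
  have hsdiff : #{i | b ≤ (π i : ℕ) ∧ (π i : ℕ) < c}
      = #(({i | (π i : ℕ) < c} : Finset (Fin n)) \ ({i | (π i : ℕ) < b} : Finset (Fin n))) := by
    congr 1
    ext i
    simp only [mem_filter, mem_univ, true_and, mem_sdiff]
    omega
  rw [hsdiff, card_sdiff_of_subset (monotone_filter_right _ fun i hi => by omega),
    π.card_filter_val_lt hc, π.card_filter_val_lt (hbc.trans hc)]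

end Equiv.Perm

namespace BalancedSeq

variable {n : ℕ} {σ : Fin n → Equiv.Perm (Fin n)}

theorem le_card_filter_lt_quota (h : BalancedSeq n σ) (i : Fin n) {t j : ℕ} (hj : 1 ≤ j)
    (hjt : j ≤ t) (htn : t ≤ n) :
    j ≤ #{s : Fin n | (s : ℕ) < t ∧ (σ s i : ℕ) < quota n t j} := by
  have ht : 0 < t := by omega
  refine (h i t (mem_Icc.2 ⟨ht, htn⟩) j (mem_Icc.2 ⟨hj, hjt⟩)).trans_eq
    (congrArg card (filter_congr fun s _ => ?_))
  rw [lt_quota_iff ht, intCast_add_one_le_ceil_div_iff ht]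

theorem lt_quota_of_forall_quota_le (h : BalancedSeq n σ) (i : Fin n) {t j : ℕ} (hj : 1 ≤ j)
    (hjt : j ≤ t) (htn : t ≤ n) {F : Finset (Fin n)}
    (hF : ∀ s ∈ F, (s : ℕ) < t ∧ quota n t j ≤ σ s i) (hFt : t ≤ j + #F) {s : Fin n}
    (hs : (s : ℕ) < t) (hsF : s ∉ F) : (σ s i : ℕ) < quota n t j :=
  forall_of_le_card_filter (h.le_card_filter_lt_quota i hj hjt htn)
    (fun s hs => ⟨(hF s hs).1, not_lt.2 (hF s hs).2⟩) hFt hs hsF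

theorem lt_quota_day_zero_or_day_one (h : BalancedSeq n σ) (hn : 4 ≤ n) (i : Fin n) :
    (σ (Fin.castLE hn 0) i : ℕ) < quota n 2 1 ∨ (σ (Fin.castLE hn 1) i : ℕ) < quota n 2 1 := by
  by_contra! hi
  exact hi.2.not_gt <| h.lt_quota_of_forall_quota_le i le_rfl (by norm_num) (by omega)
    (F := {Fin.castLE hn 0}) (by simpa using hi.1) (by simp) (by simp) (by simp)

theorem lt_quota_days_zero_one_of_day_two (h : BalancedSeq n σ) (hn : 4 ≤ n) (i : Fin n)
    (h2 : quota n 3 2 ≤ σ (Fin.castLE hn 2) i) :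
    (σ (Fin.castLE hn 0) i : ℕ) < quota n 3 2 ∧ (σ (Fin.castLE hn 1) i : ℕ) < quota n 3 2 := by
  have key (d : Fin 4) (hd : (d : ℕ) < 3) (hd2 : d ≠ 2) :
      (σ (Fin.castLE hn d) i : ℕ) < quota n 3 2 :=
    h.lt_quota_of_forall_quota_le i (t := 3) (j := 2) (by norm_num) (by norm_num) (by omega)
      (F := {Fin.castLE hn 2}) (by simpa using h2) (by simp) hd (by simpa using hd2)
  exact ⟨key 0 (by decide) (by decide), key 1 (by decide) (by decide)⟩

theorem lt_quota_days_zero_one_of_days_two_three (h : BalancedSeq n σ) (hn : 4 ≤ n) (i : Fin n)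
    (h2 : quota n 4 2 ≤ σ (Fin.castLE hn 2) i) (h3 : quota n 4 2 ≤ σ (Fin.castLE hn 3) i) :
    (σ (Fin.castLE hn 0) i : ℕ) < quota n 4 2 ∧ (σ (Fin.castLE hn 1) i : ℕ) < quota n 4 2 := by
  have key (d : Fin 4) (hd2 : d ≠ 2) (hd3 : d ≠ 3) :
      (σ (Fin.castLE hn d) i : ℕ) < quota n 4 2 :=
    h.lt_quota_of_forall_quota_le i (t := 4) (j := 2) (by norm_num) (by norm_num) hn
      (F := {Fin.castLE hn 2, Fin.castLE hn 3}) (by simpa using ⟨h2, h3⟩)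
      (by rw [card_pair (by simp)]) (by simp) (by simp [hd2, hd3])
  exact ⟨key 0 (by decide) (by decide), key 1 (by decide) (by decide)⟩

theorem eq_of_quota_le_of_quota_le (h : BalancedSeq n σ) (hn : 4 ≤ n) (i : Fin n) {d d' : Fin 4}
    (hd : quota n 4 3 ≤ σ (Fin.castLE hn d) i) (hd' : quota n 4 3 ≤ σ (Fin.castLE hn d') i) :
    d = d' := by
  by_contra hdd'
  exact hd'.not_gt <| h.lt_quota_of_forall_quota_le i (t := 4) (j := 3) (by norm_num)
    (by norm_num) hn (F := {Fin.castLE hn d}) (by simpa using hd) (by simp) (by simp)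
    (by simpa using Ne.symm hdd')

theorem quota_sub_quota_add_four_mul_le (h : BalancedSeq n σ) (hn : 4 ≤ n) :
    (quota n 4 3 - quota n 3 2) + 4 * (n - quota n 4 3) ≤ 2 * quota n 2 1 := by
  set a := quota n 2 1 with ha
  set b := quota n 3 2 with hb
  set c := quota n 4 3 with hc
  have habc : a ≤ b ∧ b ≤ c ∧ c ≤ n := by simp only [ha, hb, hc, quota]; omega
  have ha' : quota n 4 2 = a := by simp only [ha, quota]; omega
  let r (d : Fin 4) (i : Fin n) : ℕ := σ (Fin.castLE hn d) i
  let low (d : Fin 4) : Finset (Fin n) := {i | r d i < a}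
  let big (d : Fin 4) : Finset (Fin n) := {i | c ≤ r d i}
  let band : Finset (Fin n) := {i | b ≤ r 2 i ∧ r 2 i < c}
  have big_disjoint : Set.PairwiseDisjoint ↑(univ : Finset (Fin 4)) big :=
    fun d _ d' _ hdd' => disjoint_left.2 fun i hd hd' =>
      hdd' (h.eq_of_quota_le_of_quota_le hn i (mem_filter.1 hd).2 (mem_filter.1 hd').2)
  have band_inter_big : band ∩ univ.biUnion big ⊆ low 0 ∩ low 1 := by
    intro i hi
    simp only [band, big, low, r, mem_inter, mem_biUnion, mem_filter, mem_univ, true_and] at hi ⊢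
    obtain ⟨⟨hb2, hc2⟩, d, hd⟩ := hi
    have h01 := h.lt_quota_days_zero_one_of_day_two hn i hb2
    obtain rfl | rfl | rfl | rfl : d = 0 ∨ d = 1 ∨ d = 2 ∨ d = 3 := by fin_cases d <;> simp
    iterate 3 omega
    rw [← ha']
    exact h.lt_quota_days_zero_one_of_days_two_three hn i (by omega) (by omega)
  have low_union : low 0 ∪ low 1 = univ :=
    eq_univ_of_forall fun i => by
      simpa [low, r] using h.lt_quota_day_zero_or_day_one hn i
  have card_biUnion_big : #(univ.biUnion big) = 4 * (n - c) := by
    simp [card_biUnion big_disjoint, big, r, (σ _).card_filter_le_val habc.2.2]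
  have hcount := card_add_card_le_of_inter_subset low_union band_inter_big
  rwa [card_biUnion_big, (σ _).card_filter_le_val_lt habc.2.1 habc.2.2,
    (σ _).card_filter_val_lt (habc.1.trans habc.2.1 |>.trans habc.2.2),
    (σ _).card_filter_val_lt (habc.1.trans habc.2.1 |>.trans habc.2.2), ← two_mul] at hcount

end BalancedSeq

/-- For every integer `k ≥ 9`, there is no balanced permutation sequence of length
`n = 6k + 5`. -/
theorem no_balanced_sequence_six_k_add_five (k : ℕ) (hk : 9 ≤ k)
    (σ : Fin (6 * k + 5) → Equiv.Perm (Fin (6 * k + 5))) :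
    ¬ BalancedSeq (6 * k + 5) σ := fun h => by
  have key := h.quota_sub_quota_add_four_mul_le (by omega)
  simp only [quota] at key
  omega
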